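/- arXiv:2502.10185 — 2 statements merged into one kernel-verified Lean document; each statement's English description precedes it below -/
import Mathlib

section
/- Let t ≥ 2 be an integer, RSS_0 > RSS_1 > 0, and ν_0 < ν_1 real numbers. If t·log(RSS_0/t) + ν_0·log t > t·log(RSS_1/t) + ν_1·log t (i.e. model 1 has strictly smaller BIC than model 0), then the relative improvement satisfies (RSS_0 − RSS_1)/RSS_0 > 1 − exp((ν_0 − ν_1)·(log t)/t). -/
/-- If model 1 has strictly smaller BIC than model 0 on `t ≥ 2`
observations, then `(RSS₀ − RSS₁)/RSS₀ > 1 − exp((ν₀ − ν₁)·log t / t)`. -/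
theorem bic_relative_gain
    (t : ℕ) (ht : 2 ≤ t) (RSS0 RSS1 : ℝ) (ν0 ν1 : ℝ)
    (h1 : 0 < RSS1) (h01 : RSS1 < RSS0) (hν : ν0 < ν1)
    (hbic : (t : ℝ) * Real.log (RSS0 / t) + ν0 * Real.log t >
            (t : ℝ) * Real.log (RSS1 / t) + ν1 * Real.log t) :
    (RSS0 - RSS1) / RSS0 > 1 - Real.exp ((ν0 - ν1) * Real.log t / t) := by
  have ht' : (0:ℝ) < t := by positivity
  have htne : (t:ℝ) ≠ 0 := ht'.ne'
  have h0 : 0 < RSS0 := h1.trans h01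
  have hlog : Real.log RSS1 - Real.log RSS0 < (ν0 - ν1) * Real.log t / t := by
    rw [Real.log_div h0.ne' htne, Real.log_div h1.ne' htne] at hbic
    rw [lt_div_iff₀ ht']
    nlinarith [hbic]
  have hexp : RSS1 / RSS0 < Real.exp ((ν0 - ν1) * Real.log t / t) := by
    have : RSS1 / RSS0 = Real.exp (Real.log RSS1 - Real.log RSS0) := by
      rw [Real.exp_sub, Real.exp_log h1, Real.exp_log h0]
    rw [this]
    exact Real.exp_lt_exp.mpr hlog
  have : (RSS0 - RSS1) / RSS0 = 1 - RSS1 / RSS0 := by field_simp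
  rw [this]
  linarith
end

section
/- Let f: [0,1] → ℝ have bounded total variation ||f||_TV and let x_1 ≤ ... ≤ x_t be points in [0,1] with values y_i = f(x_i). For weights w ∈ (0,1), define the best single-split piecewise-constant fit gain Δ(s) = ||y − ȳ||_t^2 − (t_l/t)||y − ȳ_l||_{t_l}^2 − (t_r/t)||y − ȳ_r||_{t_r}^2 where the split at s puts t_l points left and t_r right with means ȳ_l, ȳ_r. If R denotes the excess risk of the constant fit and V = ||f||_TV, then max_s Δ(s) ≥ R^2 / V^2. -/
open Finset

private lemma sq_dev_sum {ι : Type*} (A : Finset ι) (g : ι → ℝ) (hA : (A.card : ℝ) ≠ 0) :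
    ∑ i ∈ A, (g i - (∑ j ∈ A, g j) / A.card) ^ 2
      = ∑ i ∈ A, g i ^ 2 - (∑ j ∈ A, g j) ^ 2 / A.card := by
  have expand : ∀ i ∈ A, (g i - (∑ j ∈ A, g j) / A.card) ^ 2
      = g i ^ 2 - (2 * ((∑ j ∈ A, g j) / A.card)) * g i + ((∑ j ∈ A, g j) / A.card) ^ 2 := by
    intro i _; ring
  rw [Finset.sum_congr rfl expand, Finset.sum_add_distrib, Finset.sum_sub_distrib,
    ← Finset.mul_sum, Finset.sum_const, nsmul_eq_mul]
  field_simp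
  ring

private lemma filter_sum_eq {M : Type*} [AddCommMonoid M] (t : ℕ) (F : ℕ → M) (s : ℕ)
    (hst : s ≤ t) :
    ∑ i ∈ Finset.univ.filter (fun i : Fin t => (i : ℕ) < s), F (i : ℕ)
      = ∑ j ∈ Finset.range s, F j := by
  rw [Finset.sum_filter]
  rw [Fin.sum_univ_eq_sum_range (fun j => if j < s then F j else 0) t]
  rw [← Finset.sum_subset (Finset.range_subset_range.2 hst)
    (fun j _ hj => if_neg (by simpa using hj))]
  exact Finset.sum_congr rfl fun j hj => if_pos (Finset.mem_range.1 hj)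

private lemma split_identity (SL SR a b : ℝ) (ha : 0 < a) (hb : 0 < b) :
    SL ^ 2 / a + SR ^ 2 / b - (SL + SR) ^ 2 / (a + b)
      = (SL - a * ((SL + SR) / (a + b))) ^ 2 * (a + b) / (a * b) := by
  have hab : 0 < a + b := by linarith
  field_simp
  ring

/-- For a function `f` of bounded variation on `[0,1]` evaluated at
sorted points, the best single piecewise-constant split achieves impurity gain at
least `R²/V²`, where `R` is the (empirical mean-square) excess risk of the
constant fit and `V = ‖f‖_TV`. -/
theorem pcon_split_gain_lower_bound
    (t : ℕ) (ht : 2 ≤ t) (f : ℝ → ℝ)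
    (hf : BoundedVariationOn f (Set.Icc 0 1))
    (x : Fin t → ℝ) (hx : Monotone x)
    (hxmem : ∀ i, x i ∈ Set.Icc (0 : ℝ) 1) :
    ∃ s : ℕ, 0 < s ∧ s < t ∧
      (let y : Fin t → ℝ := fun i => f (x i)
       let ybar : ℝ := (∑ i, y i) / t
       let L : Finset (Fin t) := Finset.univ.filter fun i => (i : ℕ) < s
       let Rt : Finset (Fin t) := Finset.univ.filter fun i => s ≤ (i : ℕ)
       let ybarL : ℝ := (∑ i ∈ L, y i) / L.card
       let ybarR : ℝ := (∑ i ∈ Rt, y i) / Rt.card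
       let Δ : ℝ := ((∑ i, (y i - ybar) ^ 2) - (∑ i ∈ L, (y i - ybarL) ^ 2)
                      - (∑ i ∈ Rt, (y i - ybarR) ^ 2)) / t
       let Rexc : ℝ := (∑ i, (y i - ybar) ^ 2) / t
       let V : ℝ := (eVariationOn f (Set.Icc 0 1)).toReal
       Δ ≥ Rexc ^ 2 / V ^ 2) := by
  have ht0 : 0 < t := by omega
  have htR : (0:ℝ) < t := by exact_mod_cast ht0
  have htR' : (t:ℝ) ≠ 0 := ne_of_gt htR
  set V : ℝ := (eVariationOn f (Set.Icc 0 1)).toReal with hV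
  have hVnn : 0 ≤ V := ENNReal.toReal_nonneg
  set y : Fin t → ℝ := fun i => f (x i) with hy
  set ybar : ℝ := (∑ i, y i) / t with hybar
  set z : Fin t → ℝ := fun i => y i - ybar with hz
  set Z : ℕ → ℝ := fun j => if h : j < t then z ⟨j, h⟩ else 0 with hZ
  set Y : ℕ → ℝ := fun j => if h : j < t then y ⟨j, h⟩ else 0 with hY
  set P : ℕ → ℝ := fun s => ∑ j ∈ Finset.range s, Z j with hP
  have hZval : ∀ i : Fin t, Z (i : ℕ) = z i := by
    intro i; simp only [hZ, i.isLt, dif_pos, Fin.eta]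
  have hYval : ∀ i : Fin t, Y (i : ℕ) = y i := by
    intro i; simp only [hY, i.isLt, dif_pos, Fin.eta]
  have hzsum : ∑ i, z i = 0 := by
    simp only [hz, Finset.sum_sub_distrib, Finset.sum_const, Finset.card_univ,
      Fintype.card_fin, nsmul_eq_mul, hybar]
    field_simp
    ring
  have hPt : P t = 0 := by
    show (∑ j ∈ Finset.range t, Z j) = 0
    rw [← Fin.sum_univ_eq_sum_range Z t]
    rw [Finset.sum_congr rfl (fun i _ => hZval i)]
    exact hzsum
  -- Abel summation
  have habel : ∑ i, z i ^ 2 = ∑ j ∈ Finset.range (t-1), (Y j - Y (j+1)) * P (j+1) := by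
    have h1 : ∑ i, z i ^ 2 = ∑ i, y i * z i := by
      have key : ∀ i : Fin t, y i * z i = z i ^ 2 + ybar * z i := by
        intro i
        have : y i = z i + ybar := by simp [hz]
        rw [this]; ring
      rw [Finset.sum_congr rfl (fun i _ => key i), Finset.sum_add_distrib,
        ← Finset.mul_sum, hzsum, mul_zero, add_zero]
    have h2 : ∑ i, y i * z i = ∑ j ∈ Finset.range t, Y j * Z j := by
      rw [← Fin.sum_univ_eq_sum_range (fun j => Y j * Z j) t]
      exact Finset.sum_congr rfl fun i _ => by rw [hYval, hZval]
    have h3 := Finset.sum_range_by_parts Y Z t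
    simp only [smul_eq_mul] at h3
    have hPdef : ∀ s, ∑ i ∈ Finset.range s, Z i = P s := fun s => rfl
    rw [hPdef] at h3
    simp only [hPdef] at h3
    rw [h1, h2, h3, hPt, mul_zero, zero_sub, ← Finset.sum_neg_distrib]
    exact Finset.sum_congr rfl fun j _ => by ring
  -- variation bound
  have hfin : t - 1 < t := by omega
  set u : ℕ → ℝ := fun j => x ⟨min j (t-1), lt_of_le_of_lt (min_le_right _ _) hfin⟩ with hu
  have humono : Monotone u := by
    intro a b hab
    exact hx (by simp only [Fin.mk_le_mk]; exact min_le_min hab le_rfl)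
  have humem : ∀ j, u j ∈ Set.Icc (0:ℝ) 1 := fun j => hxmem _
  have hvar := eVariationOn.sum_le (f := f) (n := t-1) humono humem
  have hVsum : ∑ j ∈ Finset.range (t-1), |Y (j+1) - Y j| ≤ V := by
    have h1 : (∑ j ∈ Finset.range (t-1), edist (f (u (j+1))) (f (u j))).toReal ≤ V :=
      ENNReal.toReal_mono hf hvar
    rw [ENNReal.toReal_sum (fun j _ => edist_ne_top _ _)] at h1
    refine le_trans (le_of_eq ?_) h1
    refine Finset.sum_congr rfl fun j hj => ?_
    have hj' : j < t - 1 := Finset.mem_range.1 hj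
    have e1 : u j = x ⟨j, by omega⟩ := by
      simp only [hu]
      congr 1
      exact Fin.ext (min_eq_left (by omega))
    have e2 : u (j+1) = x ⟨j+1, by omega⟩ := by
      simp only [hu]
      congr 1
      exact Fin.ext (min_eq_left (by omega))
    rw [e1, e2, ← dist_edist, Real.dist_eq]
    have eY1 : Y (j+1) = f (x ⟨j+1, by omega⟩) := by
      simp only [hY, hy]
      rw [dif_pos (by omega : j + 1 < t)]
    have eY2 : Y j = f (x ⟨j, by omega⟩) := by
      simp only [hY, hy]
      rw [dif_pos (by omega : j < t)]
    rw [eY1, eY2]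
  -- argmax over split points
  have hIcc : (Finset.Icc 1 (t-1)).Nonempty := ⟨1, Finset.mem_Icc.2 ⟨le_rfl, by omega⟩⟩
  obtain ⟨s₀, hs₀mem, hs₀max⟩ := Finset.exists_max_image (Finset.Icc 1 (t-1))
    (fun s => |P s|) hIcc
  obtain ⟨hs₀1, hs₀2⟩ := Finset.mem_Icc.1 hs₀mem
  have hs₀t : s₀ < t := by omega
  have hMnn : (0:ℝ) ≤ |P s₀| := abs_nonneg _
  have hRbound : ∑ i, z i ^ 2 ≤ |P s₀| * V := by
    rw [habel]
    calc ∑ j ∈ Finset.range (t-1), (Y j - Y (j+1)) * P (j+1)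
        ≤ ∑ j ∈ Finset.range (t-1), |Y (j+1) - Y j| * |P s₀| := by
          refine Finset.sum_le_sum fun j hj => ?_
          have hjr := Finset.mem_range.1 hj
          have h1 : (Y j - Y (j+1)) * P (j+1) ≤ |Y j - Y (j+1)| * |P (j+1)| := by
            rw [← abs_mul]; exact le_abs_self _
          refine h1.trans ?_
          rw [abs_sub_comm]
          exact mul_le_mul_of_nonneg_left
            (hs₀max _ (Finset.mem_Icc.2 ⟨by omega, by omega⟩)) (abs_nonneg _)
      _ = (∑ j ∈ Finset.range (t-1), |Y (j+1) - Y j|) * |P s₀| := by rw [Finset.sum_mul]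
      _ ≤ V * |P s₀| := mul_le_mul_of_nonneg_right hVsum hMnn
      _ = |P s₀| * V := mul_comm _ _
  -- cardinalities
  have hcardL : (Finset.univ.filter fun i : Fin t => (i : ℕ) < s₀).card = s₀ := by
    rw [Finset.card_eq_sum_ones, filter_sum_eq t (fun _ => (1:ℕ)) s₀ hs₀t.le,
      Finset.sum_const, Finset.card_range, smul_eq_mul, mul_one]
  have hfilter_not : (Finset.univ.filter fun i : Fin t => ¬ (i : ℕ) < s₀)
      = Finset.univ.filter fun i : Fin t => s₀ ≤ (i : ℕ) := by
    apply Finset.filter_congr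
    intro i _
    simp [not_lt]
  have hcardR : (Finset.univ.filter fun i : Fin t => s₀ ≤ (i : ℕ)).card = t - s₀ := by
    have := Finset.card_filter_add_card_filter_not
      (s := (Finset.univ : Finset (Fin t))) (p := fun i : Fin t => (i : ℕ) < s₀)
    rw [hfilter_not, hcardL, Finset.card_univ, Fintype.card_fin] at this
    omega
  -- split of sums
  have hsplit : ∀ g : Fin t → ℝ,
      (∑ i ∈ Finset.univ.filter fun i : Fin t => (i : ℕ) < s₀, g i)
        + (∑ i ∈ Finset.univ.filter fun i : Fin t => s₀ ≤ (i : ℕ), g i) = ∑ i, g i := by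
    intro g
    rw [← hfilter_not]
    exact Finset.sum_filter_add_sum_filter_not _ _ _
  -- partial sum value
  have hzL : ∑ i ∈ Finset.univ.filter (fun i : Fin t => (i : ℕ) < s₀), z i = P s₀ := by
    rw [Finset.sum_congr rfl (fun i _ => (hZval i).symm),
      filter_sum_eq t Z s₀ hs₀t.le]
  refine ⟨s₀, by omega, hs₀t, ?_⟩
  dsimp only
  rw [hcardL, hcardR]
  set SL : ℝ := ∑ i ∈ Finset.univ.filter (fun i : Fin t => (i : ℕ) < s₀), y i with hSL
  set SR : ℝ := ∑ i ∈ Finset.univ.filter (fun i : Fin t => s₀ ≤ (i : ℕ)), y i with hSR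
  set a : ℝ := (s₀ : ℝ) with ha
  have hbcast : ((t - s₀ : ℕ) : ℝ) = (t : ℝ) - a := by
    rw [ha, Nat.cast_sub hs₀t.le]
  set b : ℝ := ((t - s₀ : ℕ) : ℝ) with hb
  have hapos : 0 < a := by simp only [ha, Nat.cast_pos]; omega
  have hbpos : 0 < b := by simp only [hb, Nat.cast_pos]; omega
  have habt : a + b = (t : ℝ) := by rw [hbcast]; ring
  have hSsum : SL + SR = ∑ i, y i := hsplit y
  have hPs : P s₀ = SL - a * ybar := by
    rw [← hzL]
    simp only [hz, Finset.sum_sub_distrib, Finset.sum_const, hcardL, nsmul_eq_mul, ← hSL, ha]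
  -- deviation sum identities
  have hA : ∑ i, (y i - ybar) ^ 2 = (∑ i, y i ^ 2) - (∑ i, y i) ^ 2 / t := by
    have := sq_dev_sum Finset.univ y
      (by rw [Finset.card_univ, Fintype.card_fin]; exact htR')
    rw [Finset.card_univ, Fintype.card_fin] at this
    rw [← hybar] at this
    exact this
  have hLsum : ∑ i ∈ Finset.univ.filter (fun i : Fin t => (i : ℕ) < s₀),
      (y i - SL / (s₀ : ℝ)) ^ 2
      = (∑ i ∈ Finset.univ.filter (fun i : Fin t => (i : ℕ) < s₀), y i ^ 2) - SL ^ 2 / a := by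
    have := sq_dev_sum (Finset.univ.filter (fun i : Fin t => (i : ℕ) < s₀)) y
      (by rw [hcardL]; exact_mod_cast (by omega : s₀ ≠ 0))
    rw [hcardL, ← hSL] at this
    rw [this, ha]
  have hRsum : ∑ i ∈ Finset.univ.filter (fun i : Fin t => s₀ ≤ (i : ℕ)),
      (y i - SR / ((t - s₀ : ℕ) : ℝ)) ^ 2
      = (∑ i ∈ Finset.univ.filter (fun i : Fin t => s₀ ≤ (i : ℕ)), y i ^ 2) - SR ^ 2 / b := by
    have := sq_dev_sum (Finset.univ.filter (fun i : Fin t => s₀ ≤ (i : ℕ))) y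
      (by rw [hcardR]; exact_mod_cast (by omega : t - s₀ ≠ 0))
    rw [hcardR, ← hSR] at this
    rw [this, hb]
  have hQsum : (∑ i ∈ Finset.univ.filter (fun i : Fin t => (i : ℕ) < s₀), y i ^ 2)
      + (∑ i ∈ Finset.univ.filter (fun i : Fin t => s₀ ≤ (i : ℕ)), y i ^ 2)
      = ∑ i, y i ^ 2 := hsplit (fun i => y i ^ 2)
  -- the gain equals P s₀ ^ 2 / (a * b)
  have hgain : ((∑ i, (y i - ybar) ^ 2)
        - (∑ i ∈ Finset.univ.filter (fun i : Fin t => (i : ℕ) < s₀),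
            (y i - SL / (s₀ : ℝ)) ^ 2)
        - (∑ i ∈ Finset.univ.filter (fun i : Fin t => s₀ ≤ (i : ℕ)),
            (y i - SR / ((t - s₀ : ℕ) : ℝ)) ^ 2)) / t
      = P s₀ ^ 2 / (a * b) := by
    rw [hA, hLsum, hRsum]
    have step : (∑ i, y i ^ 2) - (∑ i, y i) ^ 2 / t
        - ((∑ i ∈ Finset.univ.filter (fun i : Fin t => (i : ℕ) < s₀), y i ^ 2) - SL ^ 2 / a)
        - ((∑ i ∈ Finset.univ.filter (fun i : Fin t => s₀ ≤ (i : ℕ)), y i ^ 2) - SR ^ 2 / b)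
        = SL ^ 2 / a + SR ^ 2 / b - (SL + SR) ^ 2 / (a + b) := by
      rw [← hQsum, hSsum, habt]; ring
    rw [step, split_identity SL SR a b hapos hbpos, hPs, hybar, ← hSsum, habt]
    have h4 : a * b ≠ 0 := (mul_pos hapos hbpos).ne'
    field_simp
  rw [hgain]
  -- final inequality
  have hzsq : ∑ i, (y i - ybar) ^ 2 = ∑ i, z i ^ 2 := rfl
  rw [hzsq]
  have habpos : 0 < a * b := mul_pos hapos hbpos
  have hablet : a * b ≤ (t:ℝ)^2 := by
    have h1 : a ≤ (t:ℝ) := by linarith [hbpos, habt]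
    have h2 : b ≤ (t:ℝ) := by linarith [hapos, habt]
    calc a * b ≤ (t:ℝ) * (t:ℝ) := mul_le_mul h1 h2 hbpos.le (by positivity)
      _ = (t:ℝ)^2 := (sq (t:ℝ)).symm
  rcases eq_or_lt_of_le hVnn with hV0 | hVpos
  · rw [← hV0]
    simp only [ne_eq, OfNat.ofNat_ne_zero, not_false_eq_true, zero_pow, div_zero]
    positivity
  · have hzsqnn : (0:ℝ) ≤ ∑ i, z i ^ 2 := Finset.sum_nonneg fun i _ => sq_nonneg _
    have hstep1 : ((∑ i, z i ^ 2) / t) ^ 2 / V ^ 2 ≤ (|P s₀| * V / t) ^ 2 / V ^ 2 := by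
      gcongr
    have hstep2 : (|P s₀| * V / t) ^ 2 / V ^ 2 = P s₀ ^ 2 / (t:ℝ)^2 := by
      rw [div_pow, mul_pow, sq_abs]
      field_simp
    have hstep3 : P s₀ ^ 2 / (t:ℝ)^2 ≤ P s₀ ^ 2 / (a * b) := by
      gcongr
    calc ((∑ i, z i ^ 2) / t) ^ 2 / V ^ 2 ≤ (|P s₀| * V / t) ^ 2 / V ^ 2 := hstep1
      _ = P s₀ ^ 2 / (t:ℝ)^2 := hstep2
      _ ≤ P s₀ ^ 2 / (a * b) := hstep3
end
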